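/- arXiv:2207.14655 — 8 statements merged into one kernel-verified Lean document; each statement's English description precedes it below -/
import Mathlib

section
/- For the system ẋ = x(1-gx-hy), ẏ = y(-3-gx-hy), ż = z(1+gx+hy+kz) (Case 5), the polynomials l₁ = 1+kz+(1/2)kz(hy-gx) and l₂ = 1-gx+(1/3)hy satisfy χ(l₁) = kz·l₁ and χ(l₂) = (-gx-hy)·l₂. -/
section Coordinates

variable (p : ℝ × ℝ × ℝ)

lemma hasFDerivAt_coord_x :
    HasFDerivAt (fun q : ℝ × ℝ × ℝ => q.1) (ContinuousLinearMap.fst ℝ ℝ (ℝ × ℝ)) p :=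
  hasFDerivAt_fst

lemma hasFDerivAt_coord_y :
    HasFDerivAt (fun q : ℝ × ℝ × ℝ => q.2.1)
      ((ContinuousLinearMap.fst ℝ ℝ ℝ).comp (ContinuousLinearMap.snd ℝ ℝ (ℝ × ℝ))) p :=
  hasFDerivAt_fst.comp p hasFDerivAt_snd

lemma hasFDerivAt_coord_z :
    HasFDerivAt (fun q : ℝ × ℝ × ℝ => q.2.2)
      ((ContinuousLinearMap.snd ℝ ℝ ℝ).comp (ContinuousLinearMap.snd ℝ ℝ (ℝ × ℝ))) p :=
  hasFDerivAt_snd.comp p hasFDerivAt_snd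

end Coordinates

lemma fderiv_l₁_apply (g h k : ℝ) (p v : ℝ × ℝ × ℝ) :
    fderiv ℝ (fun q : ℝ × ℝ × ℝ => 1 + k*q.2.2 + (1/2)*k*q.2.2*(h*q.2.1 - g*q.1)) p v =
      k*v.2.2 + (1/2)*k*(v.2.2*(h*p.2.1 - g*p.1) + p.2.2*(h*v.2.1 - g*v.1)) := by
  have hl₁ : HasFDerivAt (fun q : ℝ × ℝ × ℝ => 1 + k*q.2.2 + (1/2)*k*q.2.2*(h*q.2.1 - g*q.1))
      _ p := ((hasFDerivAt_const (1 : ℝ) p).add ((hasFDerivAt_coord_z p).const_mul k)).add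
    (((hasFDerivAt_coord_z p).const_mul ((1/2)*k)).mul
      (((hasFDerivAt_coord_y p).const_mul h).sub ((hasFDerivAt_coord_x p).const_mul g)))
  rw [hl₁.fderiv]
  simp only [zero_add, one_div, add_apply, smul_apply,
    ContinuousLinearMap.comp_apply, ContinuousLinearMap.coe_snd', smul_eq_mul,
    sub_apply, ContinuousLinearMap.coe_fst', add_right_inj]
  ring

lemma fderiv_l₂_apply (g h : ℝ) (p v : ℝ × ℝ × ℝ) :
    fderiv ℝ (fun q : ℝ × ℝ × ℝ => 1 - g*q.1 + (1/3)*h*q.2.1) p v = -(g*v.1) + (1/3)*h*v.2.1 := by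
  have hl₂ : HasFDerivAt (fun q : ℝ × ℝ × ℝ => 1 - g*q.1 + (1/3)*h*q.2.1) _ p :=
    ((hasFDerivAt_const (1 : ℝ) p).sub ((hasFDerivAt_coord_x p).const_mul g)).add
      ((hasFDerivAt_coord_y p).const_mul ((1/3)*h))
  rw [hl₂.fderiv]
  simp

theorem case5_invariant_surfaces (g h k : ℝ) :
    ∀ p : ℝ × ℝ × ℝ,
      fderiv ℝ (fun q : ℝ × ℝ × ℝ => 1 + k*q.2.2 + (1/2)*k*q.2.2*(h*q.2.1 - g*q.1)) p
        (p.1*(1 - g*p.1 - h*p.2.1),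
         p.2.1*(-3 - g*p.1 - h*p.2.1),
         p.2.2*(1 + g*p.1 + h*p.2.1 + k*p.2.2)) =
      (k*p.2.2) * (1 + k*p.2.2 + (1/2)*k*p.2.2*(h*p.2.1 - g*p.1)) ∧
      fderiv ℝ (fun q : ℝ × ℝ × ℝ => 1 - g*q.1 + (1/3)*h*q.2.1) p
        (p.1*(1 - g*p.1 - h*p.2.1),
         p.2.1*(-3 - g*p.1 - h*p.2.1),
         p.2.2*(1 + g*p.1 + h*p.2.1 + k*p.2.2)) =
      (-(g*p.1) - h*p.2.1) * (1 - g*p.1 + (1/3)*h*p.2.1) := by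
  intro p
  rw [fderiv_l₁_apply, fderiv_l₂_apply]
  constructor <;> ring
end

section
/- For the system of Case 5 (ẋ = x(1-gx-hy), ẏ = y(-3-gx-hy), ż = z(1+gx+hy+kz)), the change of variables X = x l₂⁻¹, Y = y l₂⁻¹, Z = z l₁⁻¹ l₂, with l₁ = 1+kz+(1/2)kz(hy-gx) and l₂ = 1-gx+(1/3)hy, transforms the system into the linear system Ẋ = X, Ẏ = -3Y, Ż = Z on the region where l₁ l₂ ≠ 0. -/
/-!
Both `l₂ = 1 - g x + h y / 3` and `l₁ = 1 + k z + k z (h y - g x) / 2` are Darboux functions of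
the system: along solutions `l₂' = -(g x + h y) l₂` and `l₁' = k z l₁`. Logarithmic derivatives
add under products and subtract under quotients, so the cofactors of `x / l₂`, `y / l₂` and
`z l₂ / l₁` are the constants `1`, `-3` and `1`.
-/

section Cofactor

variable {𝕜 : Type*} [NontriviallyNormedField 𝕜] {f u : 𝕜 → 𝕜} {a b t : 𝕜}

theorem HasDerivAt.mul_of_cofactors (hf : HasDerivAt f (f t * a) t)
    (hu : HasDerivAt u (u t * b) t) :
    HasDerivAt (fun s => f s * u s) (f t * u t * (a + b)) t :=
  (hf.mul hu).congr_deriv (by ring)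

theorem HasDerivAt.div_of_cofactors (hf : HasDerivAt f (f t * a) t)
    (hu : HasDerivAt u (u t * b) t) (hu₀ : u t ≠ 0) :
    HasDerivAt (fun s => f s / u s) (f t / u t * (a - b)) t :=
  (hf.div hu hu₀).congr_deriv (by field_simp)

end Cofactor

section Case5

variable {g h k t : ℝ} {x y z : ℝ → ℝ}

theorem hasDerivAt_case5_l₂
    (hx : HasDerivAt x (x t * (1 - g*x t - h*y t)) t)
    (hy : HasDerivAt y (y t * (-3 - g*x t - h*y t)) t) :
    HasDerivAt (fun s => 1 - g*x s + (1/3)*h*y s)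
      ((1 - g*x t + (1/3)*h*y t) * -(g*x t + h*y t)) t :=
  (((hasDerivAt_const t 1).sub (hx.const_mul g)).add (hy.const_mul ((1/3)*h))).congr_deriv
    (by ring)

theorem hasDerivAt_case5_l₁
    (hx : HasDerivAt x (x t * (1 - g*x t - h*y t)) t)
    (hy : HasDerivAt y (y t * (-3 - g*x t - h*y t)) t)
    (hz : HasDerivAt z (z t * (1 + g*x t + h*y t + k*z t)) t) :
    HasDerivAt (fun s => 1 + k*z s + (1/2)*k*z s*(h*y s - g*x s))
      ((1 + k*z t + (1/2)*k*z t*(h*y t - g*x t)) * (k*z t)) t :=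
  (((hasDerivAt_const t 1).add (hz.const_mul k)).add
    ((hz.const_mul ((1/2)*k)).mul ((hy.const_mul h).sub (hx.const_mul g)))).congr_deriv
    (by simp only [Pi.sub_apply]; ring)

end Case5

theorem case5_linearization (g h k : ℝ) (x y z : ℝ → ℝ)
    (hx : ∀ t, HasDerivAt x (x t * (1 - g*x t - h*y t)) t)
    (hy : ∀ t, HasDerivAt y (y t * (-3 - g*x t - h*y t)) t)
    (hz : ∀ t, HasDerivAt z (z t * (1 + g*x t + h*y t + k*z t)) t)
    (hl : ∀ t, (1 + k*z t + (1/2)*k*z t*(h*y t - g*x t)) *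
               (1 - g*x t + (1/3)*h*y t) ≠ 0) :
    ∀ t,
      HasDerivAt (fun s => x s / (1 - g*x s + (1/3)*h*y s))
        (x t / (1 - g*x t + (1/3)*h*y t)) t ∧
      HasDerivAt (fun s => y s / (1 - g*x s + (1/3)*h*y s))
        (-3 * (y t / (1 - g*x t + (1/3)*h*y t))) t ∧
      HasDerivAt (fun s => z s * (1 - g*x s + (1/3)*h*y s) /
          (1 + k*z s + (1/2)*k*z s*(h*y s - g*x s)))
        (z t * (1 - g*x t + (1/3)*h*y t) /
          (1 + k*z t + (1/2)*k*z t*(h*y t - g*x t))) t := by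
  intro t
  have hl₁ := left_ne_zero_of_mul (hl t)
  have hl₂ := right_ne_zero_of_mul (hl t)
  have hL₁ := hasDerivAt_case5_l₁ (hx t) (hy t) (hz t)
  have hL₂ := hasDerivAt_case5_l₂ (hx t) (hy t)
  refine ⟨?_, ?_, ?_⟩
  · exact ((hx t).div_of_cofactors hL₂ hl₂).congr_deriv (by ring)
  · exact ((hy t).div_of_cofactors hL₂ hl₂).congr_deriv (by ring)
  · exact (((hz t).mul_of_cofactors hL₂).div_of_cofactors hL₁ hl₁).congr_deriv (by ring)
end

section
/- For the system ẋ = x(1+ax+cz), ẏ = y(-3-ax-hy), ż = z(1+3ax+hy+2cz) (Case 22), the polynomial l = (1+ax)² + cz(2+hy) satisfies χ(l) = 2(ax+cz)·l, and consequently Φ = x²yz l⁻² is a first integral on the set where l ≠ 0. -/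
/-! Both `l` and the monomial `x²yz` are Darboux polynomials of the Case 22 field, with cofactors
`2(ax + cz)` and `4(ax + cz)`. Since the second cofactor is twice the first, `x²yz · l⁻²` has
cofactor `4(ax + cz) - 2 · 2(ax + cz) = 0`. -/

section ProdCoordinates

variable {𝕜 E F G : Type*} [NontriviallyNormedField 𝕜] [NormedAddCommGroup E] [NormedSpace 𝕜 E]
  [NormedAddCommGroup F] [NormedSpace 𝕜 F] [NormedAddCommGroup G] [NormedSpace 𝕜 G]

@[simp]
lemma fderiv_snd_fst_apply (p v : E × F × G) :
    fderiv 𝕜 (fun q : E × F × G => q.2.1) p v = v.2.1 :=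
  DFunLike.congr_fun
    (((ContinuousLinearMap.fst 𝕜 F G).comp (ContinuousLinearMap.snd 𝕜 E (F × G))).fderiv (x := p)) v

@[simp]
lemma fderiv_snd_snd_apply (p v : E × F × G) :
    fderiv 𝕜 (fun q : E × F × G => q.2.2) p v = v.2.2 :=
  DFunLike.congr_fun
    (((ContinuousLinearMap.snd 𝕜 F G).comp (ContinuousLinearMap.snd 𝕜 E (F × G))).fderiv (x := p)) v

end ProdCoordinates

section DarbouxQuotient

variable {E : Type*} [NormedAddCommGroup E] [NormedSpace ℝ E] {f g : E → ℝ} {p : E}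

lemma fderiv_mul_inv_sq_apply (hf : DifferentiableAt ℝ f p) (hg : DifferentiableAt ℝ g p)
    (hg0 : g p ≠ 0) (v : E) :
    fderiv ℝ (fun q => f q * (g q)⁻¹ ^ 2) p v =
      (fderiv ℝ f p v * g p - 2 * f p * fderiv ℝ g p v) / g p ^ 3 := by
  have hd : HasFDerivAt (fun q => f q * (g q)⁻¹ ^ 2) _ p :=
    hf.hasFDerivAt.fun_mul (((hasFDerivAt_inv hg0).comp p hg.hasFDerivAt).pow 2)
  rw [hd.fderiv]
  simp only [Function.comp_apply, Nat.add_one_sub_one, pow_one, nsmul_eq_mul, Nat.cast_ofNat, inv_pow,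
    add_apply, smul_apply, ContinuousLinearMap.comp_apply,
    ContinuousLinearMap.toSpanSingleton_apply, smul_eq_mul, mul_neg]
  field_simp
  ring

lemma fderiv_mul_inv_sq_eq_zero_of_cofactor (hf : DifferentiableAt ℝ f p)
    (hg : DifferentiableAt ℝ g p) (hg0 : g p ≠ 0) {v : E} {k : ℝ}
    (hfk : fderiv ℝ f p v = 2 * k * f p) (hgk : fderiv ℝ g p v = k * g p) :
    fderiv ℝ (fun q => f q * (g q)⁻¹ ^ 2) p v = 0 := by
  rw [fderiv_mul_inv_sq_apply hf hg hg0, hfk, hgk]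
  ring

end DarbouxQuotient

section Case22

variable (a c h : ℝ)

def case22Field (p : ℝ × ℝ × ℝ) : ℝ × ℝ × ℝ :=
  (p.1*(1 + a*p.1 + c*p.2.2),
   p.2.1*(-3 - a*p.1 - h*p.2.1),
   p.2.2*(1 + 3*a*p.1 + h*p.2.1 + 2*c*p.2.2))

def case22Darboux (q : ℝ × ℝ × ℝ) : ℝ := (1 + a*q.1)^2 + c*q.2.2*(2 + h*q.2.1)

lemma fderiv_case22Darboux_field (p : ℝ × ℝ × ℝ) :
    fderiv ℝ (case22Darboux a c h) p (case22Field a c h p) =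
      2*(a*p.1 + c*p.2.2) * case22Darboux a c h p := by
  unfold case22Darboux case22Field
  simp (disch := fun_prop) [fderiv_fun_add, fderiv_fun_mul, fderiv_fun_pow, fderiv_const_add, fderiv_fst]
  ring

lemma fderiv_monomial_case22Field (p : ℝ × ℝ × ℝ) :
    fderiv ℝ (fun q : ℝ × ℝ × ℝ => q.1^2 * q.2.1 * q.2.2) p (case22Field a c h p) =
      2 * (2*(a*p.1 + c*p.2.2)) * (p.1^2 * p.2.1 * p.2.2) := by
  unfold case22Field
  simp (disch := fun_prop) [fderiv_fun_mul, fderiv_fun_pow, fderiv_fst]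
  ring

end Case22

theorem case22_surface_and_integral (a c h : ℝ) :
    ∀ p : ℝ × ℝ × ℝ,
      (fderiv ℝ (fun q : ℝ × ℝ × ℝ => (1 + a*q.1)^2 + c*q.2.2*(2 + h*q.2.1)) p
        (p.1*(1 + a*p.1 + c*p.2.2),
         p.2.1*(-3 - a*p.1 - h*p.2.1),
         p.2.2*(1 + 3*a*p.1 + h*p.2.1 + 2*c*p.2.2)) =
      2*(a*p.1 + c*p.2.2) * ((1 + a*p.1)^2 + c*p.2.2*(2 + h*p.2.1))) ∧
      (((1 + a*p.1)^2 + c*p.2.2*(2 + h*p.2.1)) ≠ 0 →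
      fderiv ℝ (fun q : ℝ × ℝ × ℝ => q.1^2 * q.2.1 * q.2.2 * ((1 + a*q.1)^2 + c*q.2.2*(2 + h*q.2.1))⁻¹^2) p
        (p.1*(1 + a*p.1 + c*p.2.2),
         p.2.1*(-3 - a*p.1 - h*p.2.1),
         p.2.2*(1 + 3*a*p.1 + h*p.2.1 + 2*c*p.2.2)) = 0) := fun p =>
  ⟨fderiv_case22Darboux_field a c h p, fun hl =>
    fderiv_mul_inv_sq_eq_zero_of_cofactor (g := case22Darboux a c h) (by fun_prop)
      (by unfold case22Darboux; fun_prop) hl (fderiv_monomial_case22Field a c h p)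
      (fderiv_case22Darboux_field a c h p)⟩
end

section
/- For the system ẋ = x(1-gx-hy+3kz), ẏ = y(-3-gx-hy-kz), ż = z(1+gx+hy+kz) (Case 23), the polynomial l = (1+kz)² + kz(hy-gx) satisfies χ(l) = 2kz·l, and Φ = xyz² l⁻² is a first integral wherever l ≠ 0. -/
/-!
Along the vector field, the monomial `x y z²` has cofactor `4kz` (the sum of the cofactors of
`x`, `y`, `z`, weighted by their exponents) and `l` has cofactor `2kz`. Cofactors are additive
under products and change sign under inversion, so `Φ = x y z² l⁻²` has cofactor
`4kz - 2 · 2kz = 0`.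
-/

open ContinuousLinearMap

theorem HasFDerivAt.mul_inv_pow_apply_of_cofactor {𝕜 E : Type*} [NontriviallyNormedField 𝕜]
    [NormedAddCommGroup E] [NormedSpace 𝕜 E] {f l : E → 𝕜} {f' l' : E →L[𝕜] 𝕜} {p v : E}
    {a b : 𝕜} (n : ℕ) (hf : HasFDerivAt f f' p) (hl : HasFDerivAt l l' p) (hlp : l p ≠ 0)
    (hfv : f' v = a * f p) (hlv : l' v = b * l p) :
    fderiv 𝕜 (fun q => f q * (l q)⁻¹ ^ n) p v = (a - n * b) * (f p * (l p)⁻¹ ^ n) := by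
  have hinv : HasFDerivAt (fun q => (l q)⁻¹) (-(l p ^ 2)⁻¹ • l') p :=
    (hasDerivAt_inv hlp).comp_hasFDerivAt p hl
  rw [(hf.fun_mul (hinv.pow n)).fderiv]
  rcases n with _ | n
  · simpa using hfv
  · simp only [add_apply, smul_apply, smul_eq_mul, hfv, hlv, nsmul_eq_mul, Nat.add_sub_cancel, inv_pow]
    field_simp
    push_cast
    ring

section Case23

variable (g h k : ℝ)

def case23Field (p : ℝ × ℝ × ℝ) : ℝ × ℝ × ℝ :=
  (p.1 * (1 - g*p.1 - h*p.2.1 + 3*k*p.2.2),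
   p.2.1 * (-3 - g*p.1 - h*p.2.1 - k*p.2.2),
   p.2.2 * (1 + g*p.1 + h*p.2.1 + k*p.2.2))

def case23Surface (q : ℝ × ℝ × ℝ) : ℝ := (1 + k*q.2.2)^2 + k*q.2.2*(h*q.2.1 - g*q.1)

def case23Monomial (q : ℝ × ℝ × ℝ) : ℝ := q.1 * q.2.1 * q.2.2^2

variable (p : ℝ × ℝ × ℝ)

theorem hasFDerivAt_case23Surface :
    ∃ L : (ℝ × ℝ × ℝ) →L[ℝ] ℝ, HasFDerivAt (case23Surface g h k) L p ∧
      L (case23Field g h k p) = 2*k*p.2.2 * case23Surface g h k p := by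
  have hx := hasFDerivAt_fst (𝕜 := ℝ) (E := ℝ) (F := ℝ × ℝ) (p := p)
  have hy := (hasFDerivAt_snd (𝕜 := ℝ) (E := ℝ) (F := ℝ × ℝ) (p := p)).fst
  have hz := (hasFDerivAt_snd (𝕜 := ℝ) (E := ℝ) (F := ℝ × ℝ) (p := p)).snd
  refine ⟨_, (((hasFDerivAt_const 1 p).add (hz.const_mul k)).pow 2).add
    ((hz.const_mul k).mul ((hy.const_mul h).sub (hx.const_mul g))), ?_⟩
  simp [case23Field, case23Surface]
  ring

theorem hasFDerivAt_case23Monomial :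
    ∃ L : (ℝ × ℝ × ℝ) →L[ℝ] ℝ, HasFDerivAt case23Monomial L p ∧
      L (case23Field g h k p) = 4*k*p.2.2 * case23Monomial p := by
  have hx := hasFDerivAt_fst (𝕜 := ℝ) (E := ℝ) (F := ℝ × ℝ) (p := p)
  have hy := (hasFDerivAt_snd (𝕜 := ℝ) (E := ℝ) (F := ℝ × ℝ) (p := p)).fst
  have hz := (hasFDerivAt_snd (𝕜 := ℝ) (E := ℝ) (F := ℝ × ℝ) (p := p)).snd
  refine ⟨_, (hx.mul hy).mul (hz.pow 2), ?_⟩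
  simp [case23Field, case23Monomial]
  ring

end Case23

theorem case23_surface_and_integral (g h k : ℝ) :
    ∀ p : ℝ × ℝ × ℝ,
      (fderiv ℝ (fun q : ℝ × ℝ × ℝ => (1 + k*q.2.2)^2 + k*q.2.2*(h*q.2.1 - g*q.1)) p
        (p.1*(1 - g*p.1 - h*p.2.1 + 3*k*p.2.2),
         p.2.1*(-3 - g*p.1 - h*p.2.1 - k*p.2.2),
         p.2.2*(1 + g*p.1 + h*p.2.1 + k*p.2.2)) =
      2*k*p.2.2 * ((1 + k*p.2.2)^2 + k*p.2.2*(h*p.2.1 - g*p.1))) ∧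
      (((1 + k*p.2.2)^2 + k*p.2.2*(h*p.2.1 - g*p.1)) ≠ 0 →
      fderiv ℝ (fun q : ℝ × ℝ × ℝ => q.1 * q.2.1 * q.2.2^2 * ((1 + k*q.2.2)^2 + k*q.2.2*(h*q.2.1 - g*q.1))⁻¹^2) p
        (p.1*(1 - g*p.1 - h*p.2.1 + 3*k*p.2.2),
         p.2.1*(-3 - g*p.1 - h*p.2.1 - k*p.2.2),
         p.2.2*(1 + g*p.1 + h*p.2.1 + k*p.2.2)) = 0) := by
  intro p
  obtain ⟨L, hL, hLχ⟩ := hasFDerivAt_case23Surface g h k p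
  obtain ⟨M, hM, hMχ⟩ := hasFDerivAt_case23Monomial g h k p
  refine ⟨?_, fun hl => ?_⟩
  · show fderiv ℝ (case23Surface g h k) p (case23Field g h k p) = _
    rw [hL.fderiv, hLχ]
    rfl
  · show fderiv ℝ (fun q => case23Monomial q * (case23Surface g h k q)⁻¹ ^ 2) p
      (case23Field g h k p) = 0
    rw [hM.mul_inv_pow_apply_of_cofactor 2 hL hl hMχ hLχ]
    ring
end

section
/- For the system ẋ = x(1+ax+by-kz), ẏ = y(-3-3ax-3by-kz), ż = z(1+3ax-5by+kz) (Case 24), the polynomials l₁ = (1+ax+by)² + kz(ax-by) and l₂ = (1+ax+by+kz)² - 4bkyz satisfy χ(l₁) = (2ax-6by)·l₁ and χ(l₂) = (2ax-6by+2kz)·l₂. -/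
open ContinuousLinearMap

namespace Case24

def gradientForm (g : ℝ × ℝ × ℝ) : ℝ × ℝ × ℝ →L[ℝ] ℝ :=
  g.1 • fst ℝ ℝ (ℝ × ℝ) + g.2.1 • (fst ℝ ℝ ℝ).comp (snd ℝ ℝ (ℝ × ℝ)) +
    g.2.2 • (snd ℝ ℝ ℝ).comp (snd ℝ ℝ (ℝ × ℝ))

@[simp]
lemma gradientForm_apply (g v : ℝ × ℝ × ℝ) :
    gradientForm g v = g.1 * v.1 + g.2.1 * v.2.1 + g.2.2 * v.2.2 := by
  simp [gradientForm]

variable (p : ℝ × ℝ × ℝ)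

lemma hasFDerivAt_x : HasFDerivAt (fun q : ℝ × ℝ × ℝ => q.1) (gradientForm (1, 0, 0)) p :=
  hasFDerivAt_fst.congr_fderiv (ContinuousLinearMap.ext fun v => by simp)

lemma hasFDerivAt_y : HasFDerivAt (fun q : ℝ × ℝ × ℝ => q.2.1) (gradientForm (0, 1, 0)) p :=
  hasFDerivAt_snd.fst.congr_fderiv (ContinuousLinearMap.ext fun v => by simp)

lemma hasFDerivAt_z : HasFDerivAt (fun q : ℝ × ℝ × ℝ => q.2.2) (gradientForm (0, 0, 1)) p :=
  hasFDerivAt_snd.snd.congr_fderiv (ContinuousLinearMap.ext fun v => by simp)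

variable (a b k : ℝ)

def field (q : ℝ × ℝ × ℝ) : ℝ × ℝ × ℝ :=
  (q.1 * (1 + a*q.1 + b*q.2.1 - k*q.2.2),
   q.2.1 * (-3 - 3*a*q.1 - 3*b*q.2.1 - k*q.2.2),
   q.2.2 * (1 + 3*a*q.1 - 5*b*q.2.1 + k*q.2.2))

def surface₁ (q : ℝ × ℝ × ℝ) : ℝ := (1 + a*q.1 + b*q.2.1)^2 + k*q.2.2*(a*q.1 - b*q.2.1)

def surface₂ (q : ℝ × ℝ × ℝ) : ℝ := (1 + a*q.1 + b*q.2.1 + k*q.2.2)^2 - 4*b*k*q.2.1*q.2.2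

lemma hasFDerivAt_surface₁ :
    HasFDerivAt (surface₁ a b k)
      (gradientForm (2*a*(1 + a*p.1 + b*p.2.1) + a*k*p.2.2,
        2*b*(1 + a*p.1 + b*p.2.1) - b*k*p.2.2, k*(a*p.1 - b*p.2.1))) p := by
  have hx := hasFDerivAt_x p
  have hy := hasFDerivAt_y p
  have hz := hasFDerivAt_z p
  have hu := ((hasFDerivAt_const 1 p).add (hx.const_mul a)).add (hy.const_mul b)
  refine ((hu.pow 2).add ((hz.const_mul k).mul ((hx.const_mul a).sub (hy.const_mul b)))).congr_fderiv
    (ContinuousLinearMap.ext fun v => ?_)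
  simp only [add_apply, sub_apply, smul_apply, Pi.add_apply, Pi.sub_apply, gradientForm_apply,
    zero_apply, smul_eq_mul, nsmul_eq_mul, Nat.add_one_sub_one, pow_one]
  ring

lemma hasFDerivAt_surface₂ :
    HasFDerivAt (surface₂ a b k)
      (gradientForm (2*a*(1 + a*p.1 + b*p.2.1 + k*p.2.2),
        2*b*(1 + a*p.1 + b*p.2.1 + k*p.2.2) - 4*b*k*p.2.2,
        2*k*(1 + a*p.1 + b*p.2.1 + k*p.2.2) - 4*b*k*p.2.1)) p := by
  have hx := hasFDerivAt_x p
  have hy := hasFDerivAt_y p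
  have hz := hasFDerivAt_z p
  have hv := (((hasFDerivAt_const 1 p).add (hx.const_mul a)).add (hy.const_mul b)).add (hz.const_mul k)
  refine ((hv.pow 2).sub ((hy.const_mul (4*b*k)).mul hz)).congr_fderiv
    (ContinuousLinearMap.ext fun v => ?_)
  simp only [add_apply, sub_apply, smul_apply, Pi.add_apply, gradientForm_apply,
    zero_apply, smul_eq_mul, nsmul_eq_mul, Nat.add_one_sub_one, pow_one]
  ring

def IsInvariantWithCofactor {E : Type*} [NormedAddCommGroup E] [NormedSpace ℝ E]
    (χ : E → E) (f C : E → ℝ) : Prop :=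
  ∀ p, fderiv ℝ f p (χ p) = C p * f p

lemma isInvariantWithCofactor_surface₁ :
    IsInvariantWithCofactor (field a b k) (surface₁ a b k) fun p => 2*a*p.1 - 6*b*p.2.1 := by
  intro p
  rw [(hasFDerivAt_surface₁ p a b k).fderiv]
  simp only [gradientForm_apply, field, surface₁]
  ring

lemma isInvariantWithCofactor_surface₂ :
    IsInvariantWithCofactor (field a b k) (surface₂ a b k)
      fun p => 2*a*p.1 - 6*b*p.2.1 + 2*k*p.2.2 := by
  intro p
  rw [(hasFDerivAt_surface₂ p a b k).fderiv]
  simp only [gradientForm_apply, field, surface₂]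
  ring

end Case24

theorem case24_invariant_surfaces (a b k : ℝ) :
    ∀ p : ℝ × ℝ × ℝ,
      fderiv ℝ (fun q : ℝ × ℝ × ℝ => (1 + a*q.1 + b*q.2.1)^2 + k*q.2.2*(a*q.1 - b*q.2.1)) p
        (p.1*(1 + a*p.1 + b*p.2.1 - k*p.2.2),
         p.2.1*(-3 - 3*a*p.1 - 3*b*p.2.1 - k*p.2.2),
         p.2.2*(1 + 3*a*p.1 - 5*b*p.2.1 + k*p.2.2)) =
      (2*a*p.1 - 6*b*p.2.1) * ((1 + a*p.1 + b*p.2.1)^2 + k*p.2.2*(a*p.1 - b*p.2.1)) ∧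
      fderiv ℝ (fun q : ℝ × ℝ × ℝ => (1 + a*q.1 + b*q.2.1 + k*q.2.2)^2 - 4*b*k*q.2.1*q.2.2) p
        (p.1*(1 + a*p.1 + b*p.2.1 - k*p.2.2),
         p.2.1*(-3 - 3*a*p.1 - 3*b*p.2.1 - k*p.2.2),
         p.2.2*(1 + 3*a*p.1 - 5*b*p.2.1 + k*p.2.2)) =
      (2*a*p.1 - 6*b*p.2.1 + 2*k*p.2.2) * ((1 + a*p.1 + b*p.2.1 + k*p.2.2)^2 - 4*b*k*p.2.1*p.2.2) :=
  fun p => ⟨Case24.isInvariantWithCofactor_surface₁ a b k p, Case24.isInvariantWithCofactor_surface₂ a b k p⟩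
end

section
/- For the system ẋ = x(1+ax-5hy+3kz), ẏ = y(-3-3hy-3kz), ż = z(1+hy+kz) (Case 37), the polynomial l = (1+hy+kz)² + (1/2)ax(2-hy+kz) satisfies χ(l) = (ax-6hy+2kz)·l, and both φ₁ = x³y l⁻³ and φ₂ = yz³ are first integrals wherever l ≠ 0. -/
lemma fderiv_mul_inv_pow_apply_eq_zero {E : Type*} [NormedAddCommGroup E] [NormedSpace ℝ E]
    {f l : E → ℝ} {p v : E} {K : ℝ} {n : ℕ} (hf : DifferentiableAt ℝ f p)
    (hl : DifferentiableAt ℝ l p) (hl0 : l p ≠ 0) (hlK : fderiv ℝ l p v = K * l p)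
    (hfK : fderiv ℝ f p v = n * K * f p) :
    fderiv ℝ (fun q => f q * (l q)⁻¹ ^ n) p v = 0 := by
  have hinv : HasFDerivAt (fun q => (l q)⁻¹) _ p := (hasFDerivAt_inv hl0).comp p hl.hasFDerivAt
  rw [(hf.hasFDerivAt.fun_mul (hinv.pow n)).fderiv]
  simp [hlK, hfK]
  rcases n with _ | n
  · simp
  · field_simp
    push_cast
    ring

namespace Case37

variable (a h k : ℝ)

def field (p : ℝ × ℝ × ℝ) : ℝ × ℝ × ℝ :=
  (p.1 * (1 + a * p.1 - 5 * h * p.2.1 + 3 * k * p.2.2),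
   p.2.1 * (-3 - 3 * h * p.2.1 - 3 * k * p.2.2),
   p.2.2 * (1 + h * p.2.1 + k * p.2.2))

noncomputable def darboux (q : ℝ × ℝ × ℝ) : ℝ :=
  (1 + h * q.2.1 + k * q.2.2) ^ 2 + (1 / 2) * a * q.1 * (2 - h * q.2.1 + k * q.2.2)

def cofactor (p : ℝ × ℝ × ℝ) : ℝ :=
  a * p.1 - 6 * h * p.2.1 + 2 * k * p.2.2

lemma differentiable_darboux : Differentiable ℝ (darboux a h k) := by
  unfold darboux
  fun_prop

lemma fderiv_darboux_field (p : ℝ × ℝ × ℝ) :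
    fderiv ℝ (darboux a h k) p (field a h k p) = cofactor a h k p * darboux a h k p := by
  unfold darboux
  simp (disch := fun_prop) [field, cofactor, fderiv_fun_add, fderiv_fun_sub,
    fderiv_fun_mul, fderiv_fun_pow, fderiv_const_add, fderiv_fst]
  ring

lemma fderiv_fst_pow_three_mul_snd_fst_field (p : ℝ × ℝ × ℝ) :
    fderiv ℝ (fun q : ℝ × ℝ × ℝ => q.1 ^ 3 * q.2.1) p (field a h k p) =
      (3 : ℕ) * cofactor a h k p * (p.1 ^ 3 * p.2.1) := by
  simp (disch := fun_prop) [field, cofactor, fderiv_fun_mul, fderiv_fun_pow, fderiv_fst]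
  ring

lemma fderiv_snd_fst_mul_snd_snd_pow_three_field (p : ℝ × ℝ × ℝ) :
    fderiv ℝ (fun q : ℝ × ℝ × ℝ => q.2.1 * q.2.2 ^ 3) p (field a h k p) = 0 := by
  simp (disch := fun_prop) [field, fderiv_fun_mul, fderiv_fun_pow]
  ring

end Case37

theorem case37_surface_and_integrals (a h k : ℝ) :
    ∀ p : ℝ × ℝ × ℝ,
      (fderiv ℝ (fun q : ℝ × ℝ × ℝ => (1 + h*q.2.1 + k*q.2.2)^2 + (1/2)*a*q.1*(2 - h*q.2.1 + k*q.2.2)) p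
        (p.1*(1 + a*p.1 - 5*h*p.2.1 + 3*k*p.2.2),
         p.2.1*(-3 - 3*h*p.2.1 - 3*k*p.2.2),
         p.2.2*(1 + h*p.2.1 + k*p.2.2)) =
      (a*p.1 - 6*h*p.2.1 + 2*k*p.2.2) * ((1 + h*p.2.1 + k*p.2.2)^2 + (1/2)*a*p.1*(2 - h*p.2.1 + k*p.2.2))) ∧
      (((1 + h*p.2.1 + k*p.2.2)^2 + (1/2)*a*p.1*(2 - h*p.2.1 + k*p.2.2)) ≠ 0 →
      fderiv ℝ (fun q : ℝ × ℝ × ℝ => q.1^3 * q.2.1 * ((1 + h*q.2.1 + k*q.2.2)^2 + (1/2)*a*q.1*(2 - h*q.2.1 + k*q.2.2))⁻¹^3) p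
        (p.1*(1 + a*p.1 - 5*h*p.2.1 + 3*k*p.2.2),
         p.2.1*(-3 - 3*h*p.2.1 - 3*k*p.2.2),
         p.2.2*(1 + h*p.2.1 + k*p.2.2)) = 0 ∧
      fderiv ℝ (fun q : ℝ × ℝ × ℝ => q.2.1 * q.2.2^3) p
        (p.1*(1 + a*p.1 - 5*h*p.2.1 + 3*k*p.2.2),
         p.2.1*(-3 - 3*h*p.2.1 - 3*k*p.2.2),
         p.2.2*(1 + h*p.2.1 + k*p.2.2)) = 0) := by
  intro p
  have hDarboux := Case37.fderiv_darboux_field a h k p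
  refine ⟨hDarboux, fun hl0 => ⟨?_, Case37.fderiv_snd_fst_mul_snd_snd_pow_three_field a h k p⟩⟩
  exact fderiv_mul_inv_pow_apply_eq_zero (f := fun q => q.1 ^ 3 * q.2.1)
    (l := Case37.darboux a h k) (by fun_prop) (Case37.differentiable_darboux a h k p) hl0
    hDarboux (Case37.fderiv_fst_pow_three_mul_snd_fst_field a h k p)
end

section
/- For the system ẋ = x(1-(d/3)x-(e/3)y-(f/3)z), ẏ = y(-3+dx+ey+fz), ż = z(1-(d/3)x-(e/3)y-(f/3)z) (Case 41 subcase 2), the functions φ₁ = x³y and φ₂ = yz³ are first integrals. -/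
/-!
The system is of Kolmogorov type `ẋ = x A, ẏ = y B, ż = z C`, along which a monomial
`x^a y^b z^c` has derivative `(a A + b B + c C) x^a y^b z^c`. Here `A = C = 1 - L / 3` and
`B = -3 + L` with `L = d x + e y + f z`, so the exponents `(3, 1, 0)` and `(0, 1, 3)` make the
cofactor `3 A + B`, resp. `B + 3 C`, vanish identically.
-/

lemma natCast_mul_pow_pred_mul_self (n : ℕ) (x : ℝ) :
    (n : ℝ) * x ^ (n - 1) * x = n * x ^ n := by
  cases n with
  | zero => simp
  | succ k => rw [Nat.add_sub_cancel, mul_assoc, ← pow_succ]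

theorem fderiv_monomial_apply_kolmogorov (a b c : ℕ) (p : ℝ × ℝ × ℝ) (A B C : ℝ) :
    fderiv ℝ (fun q : ℝ × ℝ × ℝ => q.1 ^ a * q.2.1 ^ b * q.2.2 ^ c) p
        (p.1 * A, p.2.1 * B, p.2.2 * C) =
      (a * A + b * B + c * C) * (p.1 ^ a * p.2.1 ^ b * p.2.2 ^ c) := by
  have hx : HasFDerivAt (fun q : ℝ × ℝ × ℝ => q.1) (ContinuousLinearMap.fst ℝ ℝ (ℝ × ℝ)) p :=
    hasFDerivAt_fst
  have hy : HasFDerivAt (fun q : ℝ × ℝ × ℝ => q.2.1)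
      ((ContinuousLinearMap.fst ℝ ℝ ℝ).comp (ContinuousLinearMap.snd ℝ ℝ (ℝ × ℝ))) p :=
    hasFDerivAt_fst.comp p hasFDerivAt_snd
  have hz : HasFDerivAt (fun q : ℝ × ℝ × ℝ => q.2.2)
      ((ContinuousLinearMap.snd ℝ ℝ ℝ).comp (ContinuousLinearMap.snd ℝ ℝ (ℝ × ℝ))) p :=
    hasFDerivAt_snd.comp p hasFDerivAt_snd
  have hφ : HasFDerivAt (fun q : ℝ × ℝ × ℝ => q.1 ^ a * q.2.1 ^ b * q.2.2 ^ c) _ p :=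
    ((hx.pow a).mul (hy.pow b)).mul (hz.pow c)
  rw [hφ.fderiv]
  simp only [add_apply, smul_apply, Pi.mul_apply, ContinuousLinearMap.coe_comp,
    Function.comp_apply, ContinuousLinearMap.coe_fst', ContinuousLinearMap.coe_snd',
    nsmul_eq_mul, smul_eq_mul]
  linear_combination
    (A * p.2.1 ^ b * p.2.2 ^ c) * natCast_mul_pow_pred_mul_self a p.1 +
    (B * p.1 ^ a * p.2.2 ^ c) * natCast_mul_pow_pred_mul_self b p.2.1 +
    (C * p.1 ^ a * p.2.1 ^ b) * natCast_mul_pow_pred_mul_self c p.2.2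

theorem case41_sub2_first_integrals (d e f : ℝ) :
    ∀ p : ℝ × ℝ × ℝ,
      fderiv ℝ (fun q : ℝ × ℝ × ℝ => q.1^3 * q.2.1) p
        (p.1*(1 - (d/3)*p.1 - (e/3)*p.2.1 - (f/3)*p.2.2),
         p.2.1*(-3 + d*p.1 + e*p.2.1 + f*p.2.2),
         p.2.2*(1 - (d/3)*p.1 - (e/3)*p.2.1 - (f/3)*p.2.2)) = 0 ∧
      fderiv ℝ (fun q : ℝ × ℝ × ℝ => q.2.1 * q.2.2^3) p
        (p.1*(1 - (d/3)*p.1 - (e/3)*p.2.1 - (f/3)*p.2.2),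
         p.2.1*(-3 + d*p.1 + e*p.2.1 + f*p.2.2),
         p.2.2*(1 - (d/3)*p.1 - (e/3)*p.2.1 - (f/3)*p.2.2)) = 0 := by
  intro p
  have hφ₁ : (fun q : ℝ × ℝ × ℝ => q.1^3 * q.2.1) = fun q => q.1^3 * q.2.1^1 * q.2.2^0 := by
    funext q; ring
  have hφ₂ : (fun q : ℝ × ℝ × ℝ => q.2.1 * q.2.2^3) = fun q => q.1^0 * q.2.1^1 * q.2.2^3 := by
    funext q; ring
  rw [hφ₁, hφ₂, fderiv_monomial_apply_kolmogorov, fderiv_monomial_apply_kolmogorov]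
  constructor <;> push_cast <;> ring
end

section
/- For the system ẋ = x(1+by+cz), ẏ = y(-3-3gx), ż = z(1+gx) with parameters b, c, g ∈ ℝ, the function E = exp(3gx+by-3cz) satisfies χ(E) = 3(gx-by-cz)·E, and hence φ₁ = x³y·E and φ₂ = yz³ are first integrals of this system. -/
theorem case41_exponential_factor (b c g : ℝ) :
    ∀ p : ℝ × ℝ × ℝ,
      (fderiv ℝ (fun q : ℝ × ℝ × ℝ => Real.exp (3*g*q.1 + b*q.2.1 - 3*c*q.2.2)) p
        (p.1*(1 + b*p.2.1 + c*p.2.2),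
         p.2.1*(-3 - 3*g*p.1),
         p.2.2*(1 + g*p.1)) =
      3*(g*p.1 - b*p.2.1 - c*p.2.2) * Real.exp (3*g*p.1 + b*p.2.1 - 3*c*p.2.2)) ∧
      fderiv ℝ (fun q : ℝ × ℝ × ℝ => q.1^3 * q.2.1 * (Real.exp (3*g*q.1 + b*q.2.1 - 3*c*q.2.2))) p
        (p.1*(1 + b*p.2.1 + c*p.2.2),
         p.2.1*(-3 - 3*g*p.1),
         p.2.2*(1 + g*p.1)) = 0 ∧
      fderiv ℝ (fun q : ℝ × ℝ × ℝ => q.2.1 * q.2.2^3) p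
        (p.1*(1 + b*p.2.1 + c*p.2.2),
         p.2.1*(-3 - 3*g*p.1),
         p.2.2*(1 + g*p.1)) = 0 := by
  intro p
  set v : ℝ × ℝ × ℝ :=
    (p.1*(1 + b*p.2.1 + c*p.2.2), p.2.1*(-3 - 3*g*p.1), p.2.2*(1 + g*p.1)) with hv
  have hx : HasFDerivAt (fun q : ℝ × ℝ × ℝ => q.1)
      (ContinuousLinearMap.fst ℝ ℝ (ℝ × ℝ)) p := hasFDerivAt_fst
  have hy : HasFDerivAt (fun q : ℝ × ℝ × ℝ => q.2.1)
      ((ContinuousLinearMap.fst ℝ ℝ ℝ).comp (ContinuousLinearMap.snd ℝ ℝ (ℝ × ℝ))) p :=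
    hasFDerivAt_fst.comp p hasFDerivAt_snd
  have hz : HasFDerivAt (fun q : ℝ × ℝ × ℝ => q.2.2)
      ((ContinuousLinearMap.snd ℝ ℝ ℝ).comp (ContinuousLinearMap.snd ℝ ℝ (ℝ × ℝ))) p :=
    hasFDerivAt_snd.comp p hasFDerivAt_snd
  have hL := ((hx.const_mul (3*g)).add (hy.const_mul b)).sub (hz.const_mul (3*c))
  have hE := hL.exp
  have hE' : HasFDerivAt (fun q : ℝ × ℝ × ℝ => Real.exp (3*g*q.1 + b*q.2.1 - 3*c*q.2.2)) _ p := hE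
  have h1 : fderiv ℝ (fun q : ℝ × ℝ × ℝ => Real.exp (3*g*q.1 + b*q.2.1 - 3*c*q.2.2)) p v =
      3*(g*p.1 - b*p.2.1 - c*p.2.2) * Real.exp (3*g*p.1 + b*p.2.1 - 3*c*p.2.2) := by
    rw [hE'.fderiv]
    simp [hv]
    ring
  refine ⟨h1, ?_, ?_⟩
  · have hφ : HasFDerivAt (fun q : ℝ × ℝ × ℝ => q.1*q.1*q.1 * q.2.1 * Real.exp (3*g*q.1 + b*q.2.1 - 3*c*q.2.2)) _ p := (((hx.mul hx).mul hx).mul hy).mul hE'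
    have heq : (fun q : ℝ × ℝ × ℝ => q.1^3 * q.2.1 * (Real.exp (3*g*q.1 + b*q.2.1 - 3*c*q.2.2)))
        = fun q : ℝ × ℝ × ℝ => q.1*q.1*q.1 * q.2.1 * Real.exp (3*g*q.1 + b*q.2.1 - 3*c*q.2.2) := by
      funext q; ring
    rw [heq, hφ.fderiv]
    simp [hv]
    ring
  · have hφ : HasFDerivAt (fun q : ℝ × ℝ × ℝ => q.2.1 * (q.2.2*q.2.2*q.2.2)) _ p := hy.mul ((hz.mul hz).mul hz)
    have heq : (fun q : ℝ × ℝ × ℝ => q.2.1 * q.2.2^3)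
        = fun q : ℝ × ℝ × ℝ => q.2.1 * (q.2.2*q.2.2*q.2.2) := by
      funext q; ring
    rw [heq, hφ.fderiv]
    simp [hv]
    ring
end
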